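/- Let γ ∈ (0,1), a ≥ 0, and let G be a standard normal random variable on a probability space (Ω, P). For every μ ∈ ℝ with |μ| ≤ a, one has P(|μ + G| > λ_γ(a)) = 2 − Φ(λ_γ(a) − μ) − Φ(λ_γ(a) + μ) ≤ γ, with equality when |μ| = a. -/

import Mathlib

open MeasureTheory ProbabilityTheory Real Filter

/-- The cumulative distribution function `Φ` of the standard normal law `N(0,1)`. -/
noncomputable def Phi (x : ℝ) : ℝ := ((gaussianReal 0 1) (Set.Iic x)).toReal

/-- The inverse `Φ⁻¹` of the standard normal cdf (on `(0,1)`). -/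
noncomputable def PhiInv (y : ℝ) : ℝ := Function.invFun Phi y

/-
For `λ ≥ 0` the event `{λ < |μ + G|}` is the disjoint union of `{G < -λ - μ}` and
`{G > λ - μ}`, so by the symmetry `Φ (-x) = 1 - Φ x` its probability is the two-sided tail
`2 - Φ (λ - μ) - Φ (λ + μ)`. This tail is even in `μ`, and for `μ ≥ 0` its derivative
`φ (λ - μ) - φ (λ + μ)` is nonnegative because the Gaussian density decreases in `|x|`;
hence on `|μ| ≤ a` it is largest at `|μ| = a`, where it equals `γ`. Finally `λ ≥ 0`
because `γ < 1`, while for `λ ≤ 0` the tail is at least `1`.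
-/

open Set

instance nullSingletonClass_gaussianReal_zero_one : NullSingletonClass (gaussianReal 0 1) :=
  nullSingletonClass_gaussianReal one_ne_zero

lemma Phi_eq_cdf (x : ℝ) : Phi x = cdf (gaussianReal 0 1) x := by
  rw [cdf_eq_real, measureReal_def, Phi]

lemma Phi_nonneg (x : ℝ) : 0 ≤ Phi x := Phi_eq_cdf x ▸ cdf_nonneg _ x

lemma Phi_le_one (x : ℝ) : Phi x ≤ 1 := Phi_eq_cdf x ▸ cdf_le_one _ x

lemma monotone_Phi : Monotone Phi := fun x y hxy => by
  simpa only [Phi_eq_cdf] using monotone_cdf _ hxy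

lemma gaussianReal_Iic (x : ℝ) : gaussianReal 0 1 (Iic x) = ENNReal.ofReal (Phi x) := by
  rw [Phi_eq_cdf, ofReal_cdf]

lemma gaussianReal_Iio (x : ℝ) : gaussianReal 0 1 (Iio x) = ENNReal.ofReal (Phi x) := by
  rw [measure_congr Iio_ae_eq_Iic, gaussianReal_Iic]

lemma gaussianReal_Ioi (x : ℝ) : gaussianReal 0 1 (Ioi x) = ENNReal.ofReal (1 - Phi x) := by
  rw [← compl_Iic, prob_compl_eq_one_sub measurableSet_Iic, gaussianReal_Iic,
    ENNReal.ofReal_sub _ (Phi_nonneg x), ENNReal.ofReal_one]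

lemma Phi_neg (x : ℝ) : Phi (-x) = 1 - Phi x := by
  have hsymm : gaussianReal 0 1 (Iic (-x)) = gaussianReal 0 1 (Ioi x) := by
    have hmap : (gaussianReal 0 1).map Neg.neg = gaussianReal 0 1 := by
      simpa using gaussianReal_map_neg (μ := 0) (v := 1)
    rw [measure_congr Ioi_ae_eq_Ici, ← hmap, Measure.map_apply measurable_neg measurableSet_Iic,
      neg_preimage, neg_Iic, neg_neg, hmap]
  rw [Phi, hsymm, gaussianReal_Ioi, ENNReal.toReal_ofReal (sub_nonneg.2 (Phi_le_one x))]

lemma hasDerivAt_Phi (x : ℝ) : HasDerivAt Phi (gaussianPDFReal 0 1 x) x := by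
  have hcont : Continuous (gaussianPDFReal 0 1) := by unfold gaussianPDFReal; fun_prop
  have hint := integrable_gaussianPDFReal 0 1
  have hPhi : Phi = fun y => Phi 0 + ∫ t in (0 : ℝ)..y, gaussianPDFReal 0 1 t := by
    have hPhi_eq (y : ℝ) : Phi y = ∫ t in Iic y, gaussianPDFReal 0 1 t := by
      rw [Phi, gaussianReal_apply_eq_integral 0 one_ne_zero, ENNReal.toReal_ofReal
        (setIntegral_nonneg measurableSet_Iic fun t _ => gaussianPDFReal_nonneg 0 1 t)]
    funext y
    rw [← intervalIntegral.integral_Iic_sub_Iic hint.integrableOn hint.integrableOn,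
      hPhi_eq, hPhi_eq, add_sub_cancel]
  rw [hPhi]
  exact (intervalIntegral.integral_hasDerivAt_right hint.intervalIntegrable
    (hcont.stronglyMeasurableAtFilter _ _) hcont.continuousAt).const_add _

lemma gaussianPDFReal_le_of_sq_le {μ : ℝ} {v : NNReal} {x y : ℝ}
    (h : (x - μ) ^ 2 ≤ (y - μ) ^ 2) :
    gaussianPDFReal μ v y ≤ gaussianPDFReal μ v x := by
  unfold gaussianPDFReal
  gcongr

noncomputable def twoSidedTail (lam m : ℝ) : ℝ := 2 - Phi (lam - m) - Phi (lam + m)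

lemma twoSidedTail_neg (lam m : ℝ) : twoSidedTail lam (-m) = twoSidedTail lam m := by
  simp only [twoSidedTail, sub_neg_eq_add, ← sub_eq_add_neg]
  ring

lemma twoSidedTail_abs (lam m : ℝ) : twoSidedTail lam |m| = twoSidedTail lam m := by
  rcases abs_choice m with h | h <;> rw [h]
  exact twoSidedTail_neg lam m

lemma one_le_twoSidedTail {lam : ℝ} (hlam : lam ≤ 0) (m : ℝ) : 1 ≤ twoSidedTail lam m := by
  have h₁ : Phi (lam - m) ≤ Phi (-m) := monotone_Phi (by linarith)
  have h₂ : Phi (lam + m) ≤ Phi m := monotone_Phi (by linarith)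
  unfold twoSidedTail
  linarith [Phi_neg m]

lemma hasDerivAt_twoSidedTail (lam m : ℝ) :
    HasDerivAt (twoSidedTail lam)
      (gaussianPDFReal 0 1 (lam - m) - gaussianPDFReal 0 1 (lam + m)) m := by
  have h₁ := (hasDerivAt_Phi (lam - m)).comp_const_sub lam m
  have h₂ := (hasDerivAt_Phi (lam + m)).comp_const_add lam m
  rw [← neg_neg (gaussianPDFReal 0 1 (lam - m))]
  exact (h₁.const_sub 2).sub h₂

lemma monotoneOn_twoSidedTail {lam : ℝ} (hlam : 0 ≤ lam) :
    MonotoneOn (twoSidedTail lam) (Ici 0) := by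
  refine monotoneOn_of_hasDerivWithinAt_nonneg (convex_Ici 0)
    (fun m _ => (hasDerivAt_twoSidedTail lam m).continuousAt.continuousWithinAt)
    (fun m _ => (hasDerivAt_twoSidedTail lam m).hasDerivWithinAt) fun m hm => ?_
  rw [interior_Ici, mem_Ioi] at hm
  exact sub_nonneg.2 (gaussianPDFReal_le_of_sq_le (by nlinarith))

lemma setOf_lt_abs_add {lam : ℝ} (m : ℝ) :
    {x : ℝ | lam < |m + x|} = Iio (-lam - m) ∪ Ioi (lam - m) := by
  ext x
  simp only [mem_ofPred_eq, mem_union, mem_Iio, mem_Ioi, lt_abs]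
  constructor <;> rintro (h | h)
  exacts [.inr (by linarith), .inl (by linarith), .inr (by linarith), .inl (by linarith)]

lemma measure_lt_abs_add {Ω : Type*} [MeasurableSpace Ω] {P : Measure Ω} {G : Ω → ℝ}
    (hG : Measurable G) (hGdist : P.map G = gaussianReal 0 1) {lam : ℝ} (hlam : 0 ≤ lam)
    (m : ℝ) :
    P {ω | lam < |m + G ω|} = ENNReal.ofReal (twoSidedTail lam m) := by
  have hdisj : Disjoint (Iio (-lam - m)) (Ioi (lam - m)) := Iio_disjoint_Ioi_of_le (by linarith)
  have hpre : {ω | lam < |m + G ω|} = G ⁻¹' {x : ℝ | lam < |m + x|} := rfl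
  rw [hpre, setOf_lt_abs_add, ← Measure.map_apply hG (measurableSet_Iio.union measurableSet_Ioi),
    hGdist, measure_union hdisj measurableSet_Ioi, gaussianReal_Iio, gaussianReal_Ioi,
    ← ENNReal.ofReal_add (Phi_nonneg _) (sub_nonneg.2 (Phi_le_one _)),
    show -lam - m = -(lam + m) by ring, Phi_neg, twoSidedTail]
  congr 1
  ring

theorem stmt8_general {Ω : Type*} [MeasurableSpace Ω] (P : Measure Ω)
    (γ a : ℝ) (hγ : γ ∈ Set.Ioo (0 : ℝ) 1)
    (G : Ω → ℝ) (hG : Measurable G) (hGdist : Measure.map G P = gaussianReal 0 1)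
    (lam : ℝ) (hlam : 2 - Phi (lam - a) - Phi (lam + a) = γ)
    (μ : ℝ) (hμ : |μ| ≤ a) :
    P {ω | lam < |μ + G ω|} = ENNReal.ofReal (2 - Phi (lam - μ) - Phi (lam + μ)) ∧
      2 - Phi (lam - μ) - Phi (lam + μ) ≤ γ ∧
      (|μ| = a → 2 - Phi (lam - μ) - Phi (lam + μ) = γ) := by
  change twoSidedTail lam a = γ at hlam
  have hlam_nonneg : 0 ≤ lam := by
    by_contra! h
    linarith [one_le_twoSidedTail h.le a, hγ.2]
  refine ⟨measure_lt_abs_add hG hGdist hlam_nonneg μ, ?_, fun h => ?_⟩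
  · change twoSidedTail lam μ ≤ γ
    rw [← hlam, ← twoSidedTail_abs]
    exact monotoneOn_twoSidedTail hlam_nonneg (abs_nonneg μ) ((abs_nonneg μ).trans hμ) hμ
  · change twoSidedTail lam μ = γ
    rw [← hlam, ← twoSidedTail_abs, h]

/-- with λ_γ(a) the unique solution of 2 - Φ(x-a) - Φ(x+a) = γ, for any μ
with |μ| ≤ a one has P(|μ + G| > λ_γ(a)) = 2 - Φ(λ_γ(a) - μ) - Φ(λ_γ(a) + μ) ≤ γ, with
equality when |μ| = a. -/
theorem stmt8 {Ω : Type*} [MeasurableSpace Ω] (P : Measure Ω) [IsProbabilityMeasure P]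
    (γ a : ℝ) (hγ : γ ∈ Set.Ioo (0 : ℝ) 1) (ha : 0 ≤ a)
    (G : Ω → ℝ) (hG : Measurable G) (hGdist : Measure.map G P = gaussianReal 0 1)
    (lam : ℝ) (hlam : 2 - Phi (lam - a) - Phi (lam + a) = γ)
    (μ : ℝ) (hμ : |μ| ≤ a) :
    P {ω | lam < |μ + G ω|} = ENNReal.ofReal (2 - Phi (lam - μ) - Phi (lam + μ)) ∧
      2 - Phi (lam - μ) - Phi (lam + μ) ≤ γ ∧
      (|μ| = a → 2 - Phi (lam - μ) - Phi (lam + μ) = γ) :=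
  stmt8_general P γ a hγ G hG hGdist lam hlam μ hμ
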